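/- arXiv:2104.08561 — 5 statements merged into one kernel-verified Lean document; each statement's English description precedes it below -/
import Mathlib

section
/- For every real number x with 0 < x < 1, the infinite product ∏_{k≥1} (1 - x^k)^{-1} equals the convergent series ∑_{m≥0} x^{m(m+1)} / ( (∏_{i=1}^{m} (1 - x^i))^2 · (1 - x^{m+1}) ). -/
/-!
Write `(a;q)_m = ∏_{i<m} (1 - a q^i)` and `G(z) = ∑_m t_m(z)` with
`t_m(z) = z^m q^{m²} / ((q;q)_m (zq;q)_m)`: the generating function of partitions by the size `m`
of their Durfee square, `z` counting parts, so `G(z) (zq;q)_∞ = 1`; analytically, for `0 ≤ z ≤ 1`: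

With `g_m = (1 - q^m) t_m(z)` the terms satisfy
`(1 - zq) t_m(z) - t_m(zq) = (1 - zq)(g_m - g_{m+1})`, and `g_m → 0`, whence
`(1 - zq) G(z) = G(zq)`. Iterating, `G(z) (zq;q)_N = G(z q^N)`, and `G(w) → G(0) = 1` as `w → 0`
by dominated convergence, the terms being bounded by `q^m / (q;q)_∞²`. The theorem is the case
`z = q`, after splitting off the factor `(1 - q)⁻¹` and using
`(1 - q)(q²;q)_m = (q;q)_m (1 - q^{m+1})`.
-/

open Filter Finset Topology

def qPochhammer {R : Type*} [CommRing R] (z q : R) (m : ℕ) : R := ∏ i ∈ range m, (1 - z * q ^ i)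

section Algebra

variable {R : Type*} [CommRing R] (z q : R) (m : ℕ)

theorem qPochhammer_zero : qPochhammer z q 0 = 1 := prod_range_zero _

theorem qPochhammer_succ : qPochhammer z q (m + 1) = qPochhammer z q m * (1 - z * q ^ m) :=
  prod_range_succ _ m

theorem qPochhammer_succ' : qPochhammer z q (m + 1) = (1 - z) * qPochhammer (z * q) q m := by
  simp only [qPochhammer, prod_range_succ', pow_zero, mul_one, pow_succ', mul_assoc, mul_comm]

end Algebra

def durfeeTerm {K : Type*} [Field K] (z q : K) (m : ℕ) : K :=
  z ^ m * q ^ (m ^ 2) / (qPochhammer q q m * qPochhammer (z * q) q m)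

theorem durfeeTerm_telescope {K : Type*} [Field K] {z q : K} {m : ℕ}
    (hq : qPochhammer q q (m + 1) ≠ 0) (hz : qPochhammer (z * q) q (m + 1) ≠ 0) :
    (1 - z * q) * durfeeTerm z q m - durfeeTerm (z * q) q m =
      (1 - z * q) *
        ((1 - q ^ m) * durfeeTerm z q m - (1 - q ^ (m + 1)) * durfeeTerm z q (m + 1)) := by
  have hshift : qPochhammer (z * q * q) q m = qPochhammer (z * q) q (m + 1) / (1 - z * q) := by
    rw [qPochhammer_succ' (z * q)] at hz ⊢
    field_simp [left_ne_zero_of_mul hz]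
  rw [qPochhammer_succ] at hq hz
  obtain ⟨hq, hqm⟩ := mul_ne_zero_iff.1 hq
  obtain ⟨hz, hzm⟩ := mul_ne_zero_iff.1 hz
  simp only [durfeeTerm, hshift, qPochhammer_succ]
  field_simp
  ring

section Real

variable {z w q : ℝ}

theorem one_sub_mul_pow_nonneg (hq0 : 0 ≤ q) (hq1 : q ≤ 1) (hz1 : z ≤ 1) (i : ℕ) :
    0 ≤ 1 - z * q ^ i := by
  have := pow_nonneg hq0 i
  have := pow_le_one₀ hq0 hq1 (n := i)
  nlinarith

theorem one_sub_mul_pow_pos (hq0 : 0 ≤ q) (hq1 : q ≤ 1) (hz0 : 0 ≤ z) (hz1 : z < 1) (i : ℕ) :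
    0 < 1 - z * q ^ i := by
  have := mul_le_of_le_one_right hz0 (pow_le_one₀ hq0 hq1 (n := i))
  linarith

theorem qPochhammer_pos (hq0 : 0 ≤ q) (hq1 : q ≤ 1) (hz0 : 0 ≤ z) (hz1 : z < 1) (m : ℕ) :
    0 < qPochhammer z q m :=
  prod_pos fun i _ => one_sub_mul_pow_pos hq0 hq1 hz0 hz1 i

theorem qPochhammer_le_qPochhammer (hq0 : 0 ≤ q) (hq1 : q ≤ 1) (hzw : z ≤ w) (hw1 : w ≤ 1)
    (m : ℕ) : qPochhammer w q m ≤ qPochhammer z q m :=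
  prod_le_prod (fun i _ => one_sub_mul_pow_nonneg hq0 hq1 hw1 i) (fun i _ => by gcongr)

theorem qPochhammer_antitone (hq0 : 0 ≤ q) (hq1 : q ≤ 1) (hz0 : 0 ≤ z) (hz1 : z ≤ 1) :
    Antitone (qPochhammer z q) := by
  refine antitone_nat_of_succ_le fun m => ?_
  rw [qPochhammer_succ]
  refine mul_le_of_le_one_right (prod_nonneg fun i _ => one_sub_mul_pow_nonneg hq0 hq1 hz1 i) ?_
  have := mul_nonneg hz0 (pow_nonneg hq0 m)
  linarith

theorem multipliable_one_sub_mul_pow (z : ℝ) (hq0 : 0 ≤ q) (hq1 : q < 1) :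
    Multipliable fun k => 1 - z * q ^ k := by
  simpa [sub_eq_add_neg] using
    Real.multipliable_one_add_of_summable ((summable_geometric_of_lt_one hq0 hq1).mul_left (-z))

theorem tprod_le_qPochhammer (hq0 : 0 ≤ q) (hq1 : q < 1) (hz0 : 0 ≤ z) (hz1 : z ≤ 1) (m : ℕ) :
    ∏' k, (1 - z * q ^ k) ≤ qPochhammer z q m :=
  (qPochhammer_antitone hq0 hq1.le hz0 hz1).le_of_tendsto
    (multipliable_one_sub_mul_pow z hq0 hq1).tendsto_prod_tprod_nat m

theorem tprod_one_sub_mul_pow_pos (hq0 : 0 ≤ q) (hq1 : q < 1) (hz0 : 0 ≤ z) (hz1 : z < 1) :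
    0 < ∏' k, (1 - z * q ^ k) := by
  have hpos := one_sub_mul_pow_pos hq0 hq1.le hz0 hz1
  have hsum : Summable fun k => ‖-(z * q ^ k)‖ := by
    simpa [abs_of_nonneg, hz0, hq0] using (summable_geometric_of_lt_one hq0 hq1).mul_left z
  have hne : ∏' k, (1 + -(z * q ^ k)) ≠ 0 :=
    tprod_one_add_ne_zero_of_summable (fun k => by simpa [← sub_eq_add_neg] using (hpos k).ne') hsum
  simp only [← sub_eq_add_neg] at hne
  exact (tprod_nonneg fun k => (hpos k).le).lt_of_ne' hne

theorem durfeeTerm_nonneg (hq0 : 0 ≤ q) (hq1 : q < 1) (hw0 : 0 ≤ w) (hw1 : w ≤ 1) (m : ℕ) :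
    0 ≤ durfeeTerm w q m := by
  have hqq := qPochhammer_pos hq0 hq1.le hq0 hq1 m
  have hwq := hqq.trans_le
    (qPochhammer_le_qPochhammer hq0 hq1.le (mul_le_of_le_one_left hq0 hw1) hq1.le m)
  unfold durfeeTerm
  positivity

theorem durfeeTerm_le (hq0 : 0 ≤ q) (hq1 : q < 1) (hw0 : 0 ≤ w) (hw1 : w ≤ 1) (m : ℕ) :
    durfeeTerm w q m ≤ q ^ m / (∏' k, (1 - q * q ^ k)) ^ 2 := by
  have hc := tprod_one_sub_mul_pow_pos hq0 hq1 hq0 hq1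
  have hcq := tprod_le_qPochhammer hq0 hq1 hq0 hq1.le m
  have hqz := qPochhammer_le_qPochhammer hq0 hq1.le (mul_le_of_le_one_left hq0 hw1) hq1.le m
  have hnum : w ^ m * q ^ (m ^ 2) ≤ q ^ m :=
    (mul_le_of_le_one_left (pow_nonneg hq0 _) (pow_le_one₀ hw0 hw1)).trans
      (pow_le_pow_of_le_one hq0 hq1.le (Nat.le_self_pow two_ne_zero m))
  rw [durfeeTerm, sq (∏' k, _)]
  exact div_le_div₀ (pow_nonneg hq0 m) hnum (mul_pos hc hc)
    (mul_le_mul hcq (hcq.trans hqz) hc.le (hc.le.trans hcq))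

theorem summable_durfeeTerm (hq0 : 0 ≤ q) (hq1 : q < 1) (hw0 : 0 ≤ w) (hw1 : w ≤ 1) :
    Summable (durfeeTerm w q) :=
  ((summable_geometric_of_lt_one hq0 hq1).div_const _).of_nonneg_of_le
    (durfeeTerm_nonneg hq0 hq1 hw0 hw1) (durfeeTerm_le hq0 hq1 hw0 hw1)

theorem durfeeTerm_zero_left (q : ℝ) (m : ℕ) : durfeeTerm 0 q m = if m = 0 then 1 else 0 := by
  rcases m with _ | m <;> simp [durfeeTerm, qPochhammer]

theorem tendsto_tsum_durfeeTerm_zero (hq0 : 0 ≤ q) (hq1 : q < 1) :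
    Tendsto (fun w => ∑' m, durfeeTerm w q m) (𝓝[Set.Icc 0 1] 0) (𝓝 1) := by
  have hlim (m : ℕ) :
      Tendsto (fun w => durfeeTerm w q m) (𝓝[Set.Icc 0 1] 0) (𝓝 (durfeeTerm 0 q m)) := by
    refine ContinuousAt.continuousWithinAt ?_
    have h0 : qPochhammer q q m * qPochhammer (0 * q) q m ≠ 0 := by
      simpa [qPochhammer] using (qPochhammer_pos hq0 hq1.le hq0 hq1 m).ne'
    unfold durfeeTerm qPochhammer at *
    fun_prop (disch := exact h0)
  have := tendsto_tsum_of_dominated_convergence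
    ((summable_geometric_of_lt_one hq0 hq1).div_const _) hlim
    (eventually_nhdsWithin_of_forall fun w ⟨hw0, hw1⟩ m => by
      rw [Real.norm_of_nonneg (durfeeTerm_nonneg hq0 hq1 hw0 hw1 m)]
      exact durfeeTerm_le hq0 hq1 hw0 hw1 m)
  simpa [durfeeTerm_zero_left] using this

theorem one_sub_mul_tsum_durfeeTerm (hq0 : 0 ≤ q) (hq1 : q < 1) (hz0 : 0 ≤ z) (hz1 : z ≤ 1) :
    (1 - z * q) * ∑' m, durfeeTerm z q m = ∑' m, durfeeTerm (z * q) q m := by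
  have hzq : z * q ≤ q := mul_le_of_le_one_left hq0 hz1
  have ht := summable_durfeeTerm hq0 hq1 hz0 hz1
  have ht' := summable_durfeeTerm hq0 hq1 (mul_nonneg hz0 hq0) (hzq.trans hq1.le)
  set g : ℕ → ℝ := fun m => (1 - q ^ m) * durfeeTerm z q m
  have hg : Tendsto g atTop (𝓝 0) := by
    refine squeeze_zero (fun m => ?_) (fun m => ?_) ht.tendsto_atTop_zero
    · exact mul_nonneg (by simpa using pow_le_one₀ hq0 hq1.le (n := m))
        (durfeeTerm_nonneg hq0 hq1 hz0 hz1 m)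
    · exact mul_le_of_le_one_left (durfeeTerm_nonneg hq0 hq1 hz0 hz1 m)
        (by simpa using pow_nonneg hq0 m)
  have hstep (m : ℕ) :
      (1 - z * q) * durfeeTerm z q m - durfeeTerm (z * q) q m = (1 - z * q) * (g m - g (m + 1)) :=
    durfeeTerm_telescope (qPochhammer_pos hq0 hq1.le hq0 hq1 _).ne'
      (qPochhammer_pos hq0 hq1.le (mul_nonneg hz0 hq0) (hzq.trans_lt hq1) _).ne'
  have hzero : HasSum (fun m => (1 - z * q) * durfeeTerm z q m - durfeeTerm (z * q) q m) 0 := by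
    rw [((ht.mul_left _).sub ht').hasSum_iff_tendsto_nat]
    simp_rw [hstep, ← mul_sum, sum_range_sub', g, pow_zero, sub_self, zero_mul, zero_sub]
    simpa using (hg.neg.const_mul (1 - z * q))
  exact sub_eq_zero.1 (((ht.hasSum.mul_left _).sub ht'.hasSum).unique hzero)

theorem tsum_durfeeTerm_mul_qPochhammer (hq0 : 0 ≤ q) (hq1 : q < 1) (hz0 : 0 ≤ z) (hz1 : z ≤ 1)
    (N : ℕ) :
    (∑' m, durfeeTerm z q m) * qPochhammer (z * q) q N = ∑' m, durfeeTerm (z * q ^ N) q m := by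
  induction N with
  | zero => simp [qPochhammer_zero]
  | succ N ih =>
    have h0 : 0 ≤ z * q ^ N := mul_nonneg hz0 (pow_nonneg hq0 N)
    have h1 : z * q ^ N ≤ 1 := mul_le_one₀ hz1 (pow_nonneg hq0 N) (pow_le_one₀ hq0 hq1.le)
    rw [qPochhammer_succ, ← mul_assoc, ih, mul_comm, show z * q * q ^ N = z * q ^ N * q by ring,
      one_sub_mul_tsum_durfeeTerm hq0 hq1 h0 h1, mul_assoc, ← pow_succ]

theorem hasProd_inv_one_sub_mul_pow (hq0 : 0 ≤ q) (hq1 : q < 1) (hz0 : 0 ≤ z) (hz1 : z ≤ 1) :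
    HasProd (fun k => (1 - z * q * q ^ k)⁻¹) (∑' m, durfeeTerm z q m) := by
  set G := ∑' m, durfeeTerm z q m
  have hG : 1 ≤ G := by
    have := (summable_durfeeTerm hq0 hq1 hz0 hz1).le_tsum 0 fun m _ =>
      durfeeTerm_nonneg hq0 hq1 hz0 hz1 m
    rwa [show durfeeTerm z q 0 = 1 by simp [durfeeTerm, qPochhammer_zero]] at this
  have hzN : Tendsto (fun N => z * q ^ N) atTop (𝓝[Set.Icc 0 1] 0) := by
    refine tendsto_nhdsWithin_iff.2 ⟨?_, Eventually.of_forall fun N => ?_⟩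
    · simpa using (tendsto_pow_atTop_nhds_zero_of_lt_one hq0 hq1).const_mul z
    · exact ⟨mul_nonneg hz0 (pow_nonneg hq0 N),
        mul_le_one₀ hz1 (pow_nonneg hq0 N) (pow_le_one₀ hq0 hq1.le)⟩
  have hpartial : Tendsto (qPochhammer (z * q) q) atTop (𝓝 G⁻¹) := by
    have hiter (N : ℕ) : qPochhammer (z * q) q N = G⁻¹ * ∑' m, durfeeTerm (z * q ^ N) q m := by
      rw [← tsum_durfeeTerm_mul_qPochhammer hq0 hq1 hz0 hz1, inv_mul_cancel_left₀ (by positivity)]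
    have := ((tendsto_tsum_durfeeTerm_zero hq0 hq1).comp hzN).const_mul G⁻¹
    rw [mul_one] at this
    exact this.congr fun N => (hiter N).symm
  have hm := multipliable_one_sub_mul_pow (z * q) hq0 hq1
  have hprod : HasProd (fun k => 1 - z * q * q ^ k) G⁻¹ := by
    rw [← tendsto_nhds_unique hm.tendsto_prod_tprod_nat hpartial]
    exact hm.hasProd
  simpa using hprod.inv₀ (inv_ne_zero (by positivity))

theorem durfeeTerm_self_div {K : Type*} [Field K] {q : K} {m : ℕ}
    (h : qPochhammer q q (m + 1) ≠ 0) :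
    durfeeTerm q q m / (1 - q) =
      q ^ (m * (m + 1)) / ((∏ i ∈ range m, (1 - q ^ (i + 1))) ^ 2 * (1 - q ^ (m + 1))) := by
  have hq : 1 - q ≠ 0 := by
    rw [qPochhammer_succ'] at h
    exact left_ne_zero_of_mul h
  have hshift : qPochhammer (q * q) q m = qPochhammer q q m * (1 - q ^ (m + 1)) / (1 - q) := by
    rw [eq_div_iff hq, mul_comm, ← qPochhammer_succ', qPochhammer_succ, pow_succ']
  rw [qPochhammer_succ] at h
  have hprod : ∏ i ∈ range m, (1 - q ^ (i + 1)) = qPochhammer q q m := by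
    simp only [qPochhammer, pow_succ']
  rw [durfeeTerm, hshift, hprod]
  field_simp
  ring

theorem hasProd_inv_one_sub_pow_succ (hq0 : 0 ≤ q) (hq1 : q < 1) :
    HasProd (fun k => (1 - q ^ (k + 1))⁻¹) ((∑' m, durfeeTerm q q m) / (1 - q)) := by
  have h := hasProd_inv_one_sub_mul_pow hq0 hq1 hq0 hq1.le
  simp only [mul_assoc, ← pow_succ'] at h
  simpa [div_eq_inv_mul] using HasProd.zero_mul (f := fun k => (1 - q ^ (k + 1))⁻¹) h

end Real

/-- For `0 < x < 1`, `∏_{k≥1} (1 - x^k)⁻¹` equals the convergent series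
`∑_{m≥0} x^(m(m+1)) / ((∏_{i=1}^m (1 - x^i))² · (1 - x^(m+1)))`. -/
theorem tprod_eq_nested_tsum (x : ℝ) (hx0 : 0 < x) (hx1 : x < 1) :
    Summable (fun m : ℕ =>
      x ^ (m * (m + 1)) /
        ((∏ i ∈ Finset.range m, (1 - x ^ (i + 1))) ^ 2 * (1 - x ^ (m + 1)))) ∧
    (∏' k : ℕ, (1 - x ^ (k + 1))⁻¹) =
      ∑' m : ℕ,
        x ^ (m * (m + 1)) /
          ((∏ i ∈ Finset.range m, (1 - x ^ (i + 1))) ^ 2 * (1 - x ^ (m + 1))) := by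
  have hterm (m : ℕ) := durfeeTerm_self_div (qPochhammer_pos hx0.le hx1.le hx0.le hx1 (m + 1)).ne'
  simp_rw [← hterm]
  exact ⟨(summable_durfeeTerm hx0.le hx1 hx0.le hx1.le).div_const _,
    (hasProd_inv_one_sub_pow_succ hx0.le hx1).tprod_eq.trans tsum_div_const.symm⟩
end

section
/- Fix a real number p > 1 and define λ : ℕ → ℝ by λ(1) = 1/(p(p-1)) and λ(n) = λ(n-1)/(p^{⌊n/2⌋+1} - 1) for n ≥ 2. Then the series ∑_{n≥1} λ(n) converges and equals (∏_{k≥2}(1 - p^{-k}))^{-1} - 1. -/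
/-!
Put `x = p⁻¹` and write `(x;x)_n = ∏_{k=1}^n (1 - x^k)`. The recursion gives
`λ(2m+1) + λ(2m+2) = (1 - x) x^{(m+1)(m+2)} / ((x;x)_{m+1} (x;x)_{m+2})`, so the claim is the
Durfee-rectangle identity `∑_{m ≥ 0} x^{m(m+1)} / ((x;x)_m (x;x)_{m+1}) = 1 / (x;x)_∞`.

Its finite versions
`∑_{m ≤ n} x^{m(m+1)} [n+1, m+1]_x / (x;x)_m = ∑_{m ≤ n} x^{m²} [n, m]_x / (x;x)_m = 1 / (x;x)_n`
follow together by induction on `n`, each step being one of the two q-Pascal rules. The `m`-th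
term of the infinite series is `(x;x)_{n-m} / (x;x)_{n+1}` times that of the `n`-th finite sum, a
factor between `1` and `(x;x)_{n-M} / (x;x)_{n+1}` for `m ≤ M`. Taking `n = M` and `n = 2M`
squeezes the partial sum over `m ≤ M` between `1 / (x;x)_M` and
`(x;x)_M / ((x;x)_{2M} (x;x)_{2M+1})`, both tending to `1 / (x;x)_∞`.
-/

open Finset Filter Topology

section Field

variable {K : Type*} [Field K] {x : K}

def qPoch (x : K) (n : ℕ) : K := ∏ k ∈ range n, (1 - x ^ (k + 1))

@[simp]
theorem qPoch_zero (x : K) : qPoch x 0 = 1 := prod_range_zero _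

theorem qPoch_succ (x : K) (n : ℕ) : qPoch x (n + 1) = qPoch x n * (1 - x ^ (n + 1)) :=
  prod_range_succ _ _

theorem one_sub_pow_succ_ne_zero (hx : ∀ n, qPoch x n ≠ 0) (n : ℕ) : 1 - x ^ (n + 1) ≠ 0 :=
  right_ne_zero_of_mul (qPoch_succ x n ▸ hx (n + 1))

theorem inv_qPoch_add_pow_mul_inv_qPoch_succ (hx : ∀ n, qPoch x n ≠ 0) (n : ℕ) :
    (qPoch x n)⁻¹ + x ^ (n + 1) * (qPoch x (n + 1))⁻¹ = (qPoch x (n + 1))⁻¹ := by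
  have := hx n
  have := one_sub_pow_succ_ne_zero hx n
  rw [qPoch_succ]
  field_simp
  ring

def durfeeRectCoeff (x : K) (m : ℕ) : K := x ^ (m * (m + 1)) / (qPoch x m * qPoch x (m + 1))

/-- `x^{m(m+1)} [n+1, m+1]_x / (x;x)_m` for `m ≤ n` (junk for `m > n`). -/
def durfeeRectTerm (x : K) (n m : ℕ) : K :=
  durfeeRectCoeff x m * (qPoch x (n + 1) / qPoch x (n - m))

/-- `x^{m²} [n, m]_x / (x;x)_m` for `m ≤ n` (junk for `m > n`). -/
def durfeeSquareTerm (x : K) (n m : ℕ) : K :=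
  x ^ (m * m) / qPoch x m ^ 2 * (qPoch x n / qPoch x (n - m))

theorem durfeeRectTerm_succ (hx : ∀ n, qPoch x n ≠ 0) {n m : ℕ} (hm : m ≤ n) :
    durfeeRectTerm x (n + 1) m =
      durfeeRectTerm x n m + x ^ (n + 1) * durfeeSquareTerm x (n + 1) m := by
  obtain ⟨j, rfl⟩ := Nat.exists_eq_add_of_le hm
  rw [durfeeRectTerm, durfeeRectTerm, durfeeSquareTerm, durfeeRectCoeff,
    show m + j + 1 - m = j + 1 by omega, show m + j - m = j by omega,
    qPoch_succ x (m + j + 1), qPoch_succ x j, qPoch_succ x m]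
  have := hx m
  have := hx j
  have := hx (m + j + 1)
  have := one_sub_pow_succ_ne_zero hx m
  have := one_sub_pow_succ_ne_zero hx j
  field_simp
  ring

theorem durfeeRectTerm_self (hx : ∀ n, qPoch x n ≠ 0) (n : ℕ) :
    durfeeRectTerm x n n = x ^ n * durfeeSquareTerm x n n := by
  rw [durfeeRectTerm, durfeeSquareTerm, durfeeRectCoeff, Nat.sub_self, qPoch_zero]
  have := hx n
  have := hx (n + 1)
  field_simp
  ring

theorem durfeeSquareTerm_zero (hx : ∀ n, qPoch x n ≠ 0) (n : ℕ) :
    durfeeSquareTerm x n 0 = 1 := by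
  simp [durfeeSquareTerm, hx n]

theorem durfeeSquareTerm_succ_succ (hx : ∀ n, qPoch x n ≠ 0) {n m : ℕ} (hm : m < n) :
    durfeeSquareTerm x (n + 1) (m + 1) = durfeeSquareTerm x n (m + 1)
      + x ^ (n + 1) * (qPoch x n / qPoch x (n + 1)) * durfeeRectTerm x n m := by
  obtain ⟨j, rfl⟩ := Nat.exists_eq_add_of_lt hm
  rw [durfeeRectTerm, durfeeSquareTerm, durfeeSquareTerm, durfeeRectCoeff,
    show m + j + 1 + 1 - (m + 1) = j + 1 by omega, show m + j + 1 - (m + 1) = j by omega,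
    show m + j + 1 - m = j + 1 by omega,
    qPoch_succ x (m + j + 1), qPoch_succ x j, qPoch_succ x m]
  have := hx m
  have := hx j
  have := hx (m + j + 1)
  have := one_sub_pow_succ_ne_zero hx m
  have := one_sub_pow_succ_ne_zero hx j
  have := one_sub_pow_succ_ne_zero hx (m + j + 1)
  field_simp
  ring

theorem durfeeSquareTerm_succ_self (hx : ∀ n, qPoch x n ≠ 0) (n : ℕ) :
    durfeeSquareTerm x (n + 1) (n + 1) =
      x ^ (n + 1) * (qPoch x n / qPoch x (n + 1)) * durfeeRectTerm x n n := by
  rw [durfeeRectTerm, durfeeSquareTerm, durfeeRectCoeff, Nat.sub_self, Nat.sub_self, qPoch_zero]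
  have := hx n
  have := hx (n + 1)
  field_simp
  ring

theorem sum_durfeeRectTerm_succ (hx : ∀ n, qPoch x n ≠ 0) (n : ℕ) :
    ∑ m ∈ range (n + 2), durfeeRectTerm x (n + 1) m =
      ∑ m ∈ range (n + 1), durfeeRectTerm x n m
        + x ^ (n + 1) * ∑ m ∈ range (n + 2), durfeeSquareTerm x (n + 1) m := by
  rw [sum_range_succ, sum_range_succ (durfeeSquareTerm x (n + 1)), mul_add, mul_sum,
    durfeeRectTerm_self hx, ← add_assoc, ← sum_add_distrib]
  congr 1
  exact sum_congr rfl fun m hm => durfeeRectTerm_succ hx (Nat.lt_succ_iff.mp (mem_range.mp hm))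

theorem sum_durfeeSquareTerm_succ (hx : ∀ n, qPoch x n ≠ 0) (n : ℕ) :
    ∑ m ∈ range (n + 2), durfeeSquareTerm x (n + 1) m =
      ∑ m ∈ range (n + 1), durfeeSquareTerm x n m
        + x ^ (n + 1) * (qPoch x n / qPoch x (n + 1)) *
          ∑ m ∈ range (n + 1), durfeeRectTerm x n m := by
  rw [sum_range_succ', sum_range_succ, sum_range_succ' (durfeeSquareTerm x n),
    sum_range_succ (durfeeRectTerm x n), mul_add, mul_sum, durfeeSquareTerm_succ_self hx,
    durfeeSquareTerm_zero hx, durfeeSquareTerm_zero hx, sum_congr rfl fun m hm =>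
      durfeeSquareTerm_succ_succ hx (mem_range.mp hm), sum_add_distrib]
  ring

theorem sum_durfeeTerms_eq_inv_qPoch (hx : ∀ n, qPoch x n ≠ 0) (n : ℕ) :
    ∑ m ∈ range (n + 1), durfeeRectTerm x n m = (qPoch x n)⁻¹ ∧
      ∑ m ∈ range (n + 1), durfeeSquareTerm x n m = (qPoch x n)⁻¹ := by
  induction n with
  | zero => simp [durfeeRectTerm, durfeeSquareTerm, durfeeRectCoeff, hx 1]
  | succ n ih =>
    have hsquare :
        ∑ m ∈ range (n + 2), durfeeSquareTerm x (n + 1) m = (qPoch x (n + 1))⁻¹ := by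
      rw [sum_durfeeSquareTerm_succ hx, ih.1, ih.2, ← inv_qPoch_add_pow_mul_inv_qPoch_succ hx,
        mul_assoc, div_mul_eq_mul_div, mul_inv_cancel₀ (hx n), one_div]
    refine ⟨?_, hsquare⟩
    rw [sum_durfeeRectTerm_succ hx, ih.1, hsquare, inv_qPoch_add_pow_mul_inv_qPoch_succ hx]

end Field

section Real

variable {x : ℝ}

theorem one_sub_pow_pos (hx0 : 0 ≤ x) (hx1 : x < 1) {k : ℕ} (hk : k ≠ 0) : 0 < 1 - x ^ k :=
  sub_pos.2 (pow_lt_one₀ hx0 hx1 hk)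

theorem qPoch_pos (hx0 : 0 ≤ x) (hx1 : x < 1) (n : ℕ) : 0 < qPoch x n :=
  prod_pos fun k _ => one_sub_pow_pos hx0 hx1 k.succ_ne_zero

theorem qPoch_antitone (hx0 : 0 ≤ x) (hx1 : x < 1) : Antitone (qPoch x) :=
  antitone_nat_of_succ_le fun n => by
    rw [qPoch_succ]
    exact mul_le_of_le_one_right (qPoch_pos hx0 hx1 n).le (sub_le_self _ (pow_nonneg hx0 _))

theorem summable_norm_neg_pow_add (hx0 : 0 ≤ x) (hx1 : x < 1) (j : ℕ) :
    Summable fun k : ℕ => ‖-x ^ (k + j)‖ := by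
  simpa [abs_of_nonneg hx0] using
    (summable_nat_add_iff j).mpr (summable_geometric_of_lt_one hx0 hx1)

theorem multipliable_one_sub_pow_add (hx0 : 0 ≤ x) (hx1 : x < 1) (j : ℕ) :
    Multipliable fun k : ℕ => 1 - x ^ (k + j) := by
  simpa [sub_eq_add_neg] using
    multipliable_one_add_of_summable (summable_norm_neg_pow_add hx0 hx1 j)

theorem tendsto_qPoch (hx0 : 0 ≤ x) (hx1 : x < 1) :
    Tendsto (qPoch x) atTop (𝓝 (∏' k : ℕ, (1 - x ^ (k + 1)))) :=
  (multipliable_one_sub_pow_add hx0 hx1 1).tendsto_prod_tprod_nat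

theorem tprod_one_sub_pow_succ_pos (hx0 : 0 ≤ x) (hx1 : x < 1) :
    0 < ∏' k : ℕ, (1 - x ^ (k + 1)) := by
  have hne : ∏' k : ℕ, (1 - x ^ (k + 1)) ≠ 0 := by
    simpa [sub_eq_add_neg] using tprod_one_add_ne_zero_of_summable
      (fun k => by simpa [← sub_eq_add_neg] using (one_sub_pow_pos hx0 hx1 k.succ_ne_zero).ne')
      (summable_norm_neg_pow_add hx0 hx1 1)
  exact (ge_of_tendsto' (tendsto_qPoch hx0 hx1) fun n => (qPoch_pos hx0 hx1 n).le).lt_of_ne' hne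

theorem tprod_one_sub_pow_succ_eq (hx0 : 0 ≤ x) (hx1 : x < 1) :
    ∏' k : ℕ, (1 - x ^ (k + 1)) = (1 - x) * ∏' k : ℕ, (1 - x ^ (k + 2)) := by
  have h : Multipliable fun k : ℕ => 1 - x ^ (k + 1 + 1) := by
    simpa only [add_assoc] using multipliable_one_sub_pow_add hx0 hx1 2
  rw [tprod_eq_zero_mul' (f := fun k : ℕ => 1 - x ^ (k + 1)) h, zero_add, pow_one]

theorem durfeeRectCoeff_nonneg (hx0 : 0 ≤ x) (hx1 : x < 1) (m : ℕ) : 0 ≤ durfeeRectCoeff x m :=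
  div_nonneg (pow_nonneg hx0 _) (mul_pos (qPoch_pos hx0 hx1 m) (qPoch_pos hx0 hx1 _)).le

theorem durfeeRectTerm_nonneg (hx0 : 0 ≤ x) (hx1 : x < 1) (n m : ℕ) :
    0 ≤ durfeeRectTerm x n m :=
  mul_nonneg (durfeeRectCoeff_nonneg hx0 hx1 m)
    (div_nonneg (qPoch_pos hx0 hx1 _).le (qPoch_pos hx0 hx1 _).le)

theorem durfeeRectTerm_le_coeff (hx0 : 0 ≤ x) (hx1 : x < 1) (n m : ℕ) :
    durfeeRectTerm x n m ≤ durfeeRectCoeff x m :=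
  mul_le_of_le_one_right (durfeeRectCoeff_nonneg hx0 hx1 m) <|
    (div_le_one (qPoch_pos hx0 hx1 _)).2 (qPoch_antitone hx0 hx1 (by omega))

theorem durfeeRectCoeff_le (hx0 : 0 ≤ x) (hx1 : x < 1) {m M : ℕ} (hm : m ≤ M) :
    durfeeRectCoeff x m ≤ qPoch x M / qPoch x (2 * M + 1) * durfeeRectTerm x (2 * M) m := by
  have hpos := qPoch_pos hx0 hx1
  rw [durfeeRectTerm, mul_left_comm, div_mul_div_cancel₀ (hpos _).ne']
  exact le_mul_of_one_le_right (durfeeRectCoeff_nonneg hx0 hx1 m)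
    ((one_le_div (hpos _)).2 (qPoch_antitone hx0 hx1 (by omega)))

theorem hasSum_durfeeRectCoeff (hx0 : 0 ≤ x) (hx1 : x < 1) :
    HasSum (durfeeRectCoeff x) (∏' k : ℕ, (1 - x ^ (k + 1)))⁻¹ := by
  have hL := (tprod_one_sub_pow_succ_pos hx0 hx1).ne'
  have hx : ∀ n, qPoch x n ≠ 0 := fun n => (qPoch_pos hx0 hx1 n).ne'
  have hlim := tendsto_qPoch hx0 hx1
  rw [hasSum_iff_tendsto_nat_of_nonneg (durfeeRectCoeff_nonneg hx0 hx1),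
    ← tendsto_add_atTop_iff_nat 1]
  have lower (M : ℕ) : (qPoch x M)⁻¹ ≤ ∑ m ∈ range (M + 1), durfeeRectCoeff x m := by
    rw [← (sum_durfeeTerms_eq_inv_qPoch hx M).1]
    exact sum_le_sum fun m _ => durfeeRectTerm_le_coeff hx0 hx1 M m
  have upper (M : ℕ) : ∑ m ∈ range (M + 1), durfeeRectCoeff x m ≤
      qPoch x M / qPoch x (2 * M + 1) * (qPoch x (2 * M))⁻¹ := by
    rw [← (sum_durfeeTerms_eq_inv_qPoch hx (2 * M)).1, mul_sum]
    calc ∑ m ∈ range (M + 1), durfeeRectCoeff x m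
        ≤ ∑ m ∈ range (M + 1), qPoch x M / qPoch x (2 * M + 1) * durfeeRectTerm x (2 * M) m :=
          sum_le_sum fun m hm =>
            durfeeRectCoeff_le hx0 hx1 (Nat.lt_succ_iff.mp (mem_range.mp hm))
      _ ≤ _ := sum_le_sum_of_subset_of_nonneg (range_subset_range.2 (by omega)) fun m _ _ =>
          mul_nonneg (div_nonneg (qPoch_pos hx0 hx1 _).le (qPoch_pos hx0 hx1 _).le)
            (durfeeRectTerm_nonneg hx0 hx1 _ m)
  have hlim_odd := hlim.comp (tendsto_atTop_mono (fun n => by omega : ∀ n, n ≤ 2 * n + 1)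
    tendsto_id)
  have hlim_even := hlim.comp (tendsto_atTop_mono (fun n => by omega : ∀ n, n ≤ 2 * n)
    tendsto_id)
  refine tendsto_of_tendsto_of_tendsto_of_le_of_le (hlim.inv₀ hL) ?_ lower upper
  simpa [div_self hL] using (hlim.div hlim_odd hL).mul (hlim_even.inv₀ hL)

end Real

theorem HasSum.of_even_add_odd_of_nonneg {f : ℕ → ℝ} {a : ℝ} (hf : ∀ n, 0 ≤ f n)
    (h : HasSum (fun k => f (2 * k) + f (2 * k + 1)) a) : HasSum f a := by
  have he : Summable fun k => f (2 * k) :=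
    h.summable.of_nonneg_of_le (fun k => hf _) fun k => le_add_of_nonneg_right (hf _)
  have ho : Summable fun k => f (2 * k + 1) :=
    h.summable.of_nonneg_of_le (fun k => hf _) fun k => le_add_of_nonneg_left (hf _)
  exact (he.hasSum.add ho.hasSum).unique h ▸ he.hasSum.even_add_odd ho.hasSum

section Lambda

variable {K : Type*} [Field K] {x : K} {l : ℕ → K}

theorem lambda_even_eq
    (hrec : ∀ n, 2 ≤ n → l n = l (n - 1) * (x ^ (n / 2 + 1) / (1 - x ^ (n / 2 + 1))))
    (m : ℕ) : l (2 * m + 2) = l (2 * m + 1) * (x ^ (m + 2) / (1 - x ^ (m + 2))) := by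
  rw [hrec _ (by omega), show 2 * m + 2 - 1 = 2 * m + 1 by omega,
    show (2 * m + 2) / 2 + 1 = m + 2 by omega]

theorem lambda_odd_succ_eq
    (hrec : ∀ n, 2 ≤ n → l n = l (n - 1) * (x ^ (n / 2 + 1) / (1 - x ^ (n / 2 + 1))))
    (m : ℕ) : l (2 * m + 3) = l (2 * m + 2) * (x ^ (m + 2) / (1 - x ^ (m + 2))) := by
  rw [hrec _ (by omega), show 2 * m + 3 - 1 = 2 * m + 2 by omega,
    show (2 * m + 3) / 2 + 1 = m + 2 by omega]

theorem lambda_odd_eq (hx : ∀ n, qPoch x n ≠ 0) (h1 : l 1 = x ^ 2 / (1 - x))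
    (hrec : ∀ n, 2 ≤ n → l n = l (n - 1) * (x ^ (n / 2 + 1) / (1 - x ^ (n / 2 + 1))))
    (m : ℕ) : l (2 * m + 1) = (1 - x) * x ^ ((m + 1) * (m + 2)) / qPoch x (m + 1) ^ 2 := by
  induction m with
  | zero =>
    have := one_sub_pow_succ_ne_zero hx 0
    rw [zero_add, pow_one] at this
    rw [qPoch_succ, qPoch_zero]
    norm_num [h1]
    field_simp
  | succ m ih =>
    have := hx (m + 1)
    have := one_sub_pow_succ_ne_zero hx (m + 1)
    rw [show 2 * (m + 1) + 1 = 2 * m + 3 by omega, lambda_odd_succ_eq hrec, lambda_even_eq hrec,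
      ih, qPoch_succ x (m + 1)]
    field_simp
    ring

theorem lambda_odd_add_even (hx : ∀ n, qPoch x n ≠ 0) (h1 : l 1 = x ^ 2 / (1 - x))
    (hrec : ∀ n, 2 ≤ n → l n = l (n - 1) * (x ^ (n / 2 + 1) / (1 - x ^ (n / 2 + 1))))
    (m : ℕ) : l (2 * m + 1) + l (2 * m + 2) = (1 - x) * durfeeRectCoeff x (m + 1) := by
  have := hx (m + 1)
  have := one_sub_pow_succ_ne_zero hx (m + 1)
  rw [lambda_even_eq hrec, lambda_odd_eq hx h1 hrec, durfeeRectCoeff, qPoch_succ x (m + 1)]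
  field_simp
  ring

end Lambda

theorem hasSum_lambda {x : ℝ} {l : ℕ → ℝ} (hx0 : 0 ≤ x) (hx1 : x < 1)
    (h1 : l 1 = x ^ 2 / (1 - x))
    (hrec : ∀ n, 2 ≤ n → l n = l (n - 1) * (x ^ (n / 2 + 1) / (1 - x ^ (n / 2 + 1)))) :
    HasSum (fun n => l (n + 1)) ((∏' k : ℕ, (1 - x ^ (k + 2)))⁻¹ - 1) := by
  have hx : ∀ n, qPoch x n ≠ 0 := fun n => (qPoch_pos hx0 hx1 n).ne'
  have hodd (m : ℕ) : 0 ≤ l (2 * m + 1) := by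
    rw [lambda_odd_eq hx h1 hrec]
    exact div_nonneg (mul_nonneg (by linarith) (pow_nonneg hx0 _)) (sq_nonneg _)
  have hnonneg (n : ℕ) : 0 ≤ l (n + 1) := by
    obtain ⟨m, rfl | rfl⟩ := Nat.even_or_odd' n
    · exact hodd m
    · exact (lambda_even_eq hrec m).symm ▸ mul_nonneg (hodd m)
        (div_nonneg (pow_nonneg hx0 _) (one_sub_pow_pos hx0 hx1 (by omega)).le)
  have hpair :=
    ((hasSum_nat_add_iff' 1).2 (hasSum_durfeeRectCoeff hx0 hx1)).mul_left (1 - x)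
  simp only [← lambda_odd_add_even hx h1 hrec] at hpair
  convert hpair.of_even_add_odd_of_nonneg hnonneg using 1
  have hP := tprod_one_sub_pow_succ_pos hx0 hx1
  rw [tprod_one_sub_pow_succ_eq hx0 hx1] at hP ⊢
  have hx1' : 1 - x ≠ 0 := by linarith
  have hP' := (pos_of_mul_pos_right hP (by linarith)).ne'
  simp only [durfeeRectCoeff, range_one, sum_singleton, qPoch_succ, qPoch_zero, zero_add,
    pow_zero, pow_one, one_mul, mul_one]
  field_simp

/-- For `p > 1` and `λ` defined by `λ 1 = 1/(p(p-1))`,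
`λ n = λ (n-1) / (p^(⌊n/2⌋+1) - 1)` for `n ≥ 2`, the series `∑_{n≥1} λ n`
converges and equals `(∏_{k≥2} (1 - p^{-k}))⁻¹ - 1`. -/
theorem tsum_lambda_eq (p : ℝ) (hp : 1 < p)
    (l : ℕ → ℝ) (h1 : l 1 = 1 / (p * (p - 1)))
    (hrec : ∀ n, 2 ≤ n → l n = l (n - 1) / (p ^ (n / 2 + 1) - 1)) :
    Summable (fun n : ℕ => l (n + 1)) ∧
    (∑' n : ℕ, l (n + 1)) = (∏' k : ℕ, (1 - (p ^ (k + 2))⁻¹))⁻¹ - 1 := by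
  have hp0 : p ≠ 0 := by positivity
  have hp1 : p - 1 ≠ 0 := by linarith
  have h1' : l 1 = p⁻¹ ^ 2 / (1 - p⁻¹) := by
    rw [h1]
    field_simp
  have hrec' (n : ℕ) (hn : 2 ≤ n) :
      l n = l (n - 1) * (p⁻¹ ^ (n / 2 + 1) / (1 - p⁻¹ ^ (n / 2 + 1))) := by
    have hk : p ^ (n / 2 + 1) - 1 ≠ 0 := (sub_pos.2 (one_lt_pow₀ hp (by omega))).ne'
    rw [hrec n hn, inv_pow]
    field_simp
  have h := hasSum_lambda (inv_nonneg.2 (by positivity)) (inv_lt_one_of_one_lt₀ hp) h1' hrec'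
  simp only [inv_pow] at h
  exact ⟨h.summable, h.tsum_eq⟩
end

section
/- Define μ on odd positive integers by μ(1) = 1, μ(p) = p(p-1) for odd primes p, μ(p^n) = μ(p^{n-1})(p^{⌊n/2⌋+1} - 1) for n ≥ 2, extended multiplicatively to all odd positive integers. Then for all odd positive integers q₁, q₂ with q₁ ∣ q₂, the integer μ(q₁) divides μ(q₂). -/
/-!
Removing the full power of a prime `p ∣ q₁` from both `q₁` and `q₂` and using multiplicativity
reduces the claim to `μ (p ^ k) ∣ μ (p ^ l)` for `k ≤ l`, and to the same claim for the
cofactors, which is handled by induction on `q₁`. The prime-power case holds because the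
recursion for `μ (p ^ n)` multiplies `μ (p ^ (n - 1))` by an integer, while `μ 1 ∣ μ p`
already follows from `μ p = μ (1 * p) = μ 1 * μ p`.
-/

def IsOddMultiplicative (μ : ℕ → ℕ) : Prop :=
  ∀ a b : ℕ, 0 < a → 0 < b → Odd a → Odd b → Nat.Coprime a b → μ (a * b) = μ a * μ b

namespace IsOddMultiplicative

variable {μ : ℕ → ℕ}

theorem map_one_dvd (hμ : IsOddMultiplicative μ) {n : ℕ} (hn : Odd n) : μ 1 ∣ μ n :=
  Dvd.intro _ (by simpa using (hμ 1 n one_pos hn.pos odd_one hn (Nat.coprime_one_left n)).symm)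

theorem map_eq_map_ordProj_mul_map_ordCompl (hμ : IsOddMultiplicative μ) {n : ℕ} (hn : Odd n)
    {p : ℕ} (hp : p.Prime) :
    μ n = μ (p ^ n.factorization p) * μ (n / p ^ n.factorization p) := by
  have hn₀ : n ≠ 0 := hn.pos.ne'
  conv_lhs => rw [← Nat.ordProj_mul_ordCompl_eq_self n p]
  exact hμ _ _ (pow_pos hp.pos _) (Nat.ordCompl_pos p hn₀)
    (hn.of_dvd_nat (Nat.ordProj_dvd n p)) (hn.of_dvd_nat (Nat.ordCompl_dvd n p))
    ((Nat.coprime_ordCompl hp hn₀).pow_left _)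

theorem map_pow_dvd_of_le (hμ : IsOddMultiplicative μ) {p : ℕ} (hpodd : Odd p)
    (hpow : ∀ n : ℕ, 2 ≤ n → μ (p ^ n) = μ (p ^ (n - 1)) * (p ^ (n / 2 + 1) - 1))
    {m n : ℕ} (hmn : m ≤ n) : μ (p ^ m) ∣ μ (p ^ n) := by
  refine Nat.rel_of_forall_rel_succ_of_le (· ∣ ·) (f := fun k => μ (p ^ k)) (fun k => ?_) hmn
  cases k with
  | zero => simpa using hμ.map_one_dvd hpodd
  | succ k => exact Dvd.intro _ (hpow (k + 2) (by omega)).symm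

theorem map_dvd_map_of_dvd (hμ : IsOddMultiplicative μ)
    (hprime_pow : ∀ p : ℕ, p.Prime → Odd p → ∀ m n : ℕ, m ≤ n → μ (p ^ m) ∣ μ (p ^ n))
    {q₁ q₂ : ℕ} (hq₂ : Odd q₂) (hdvd : q₁ ∣ q₂) : μ q₁ ∣ μ q₂ := by
  induction q₁ using Nat.strong_induction_on generalizing q₂ with
  | _ q₁ ih =>
    have hq₁ : Odd q₁ := hq₂.of_dvd_nat hdvd
    obtain rfl | hne := eq_or_ne q₁ 1
    · exact hμ.map_one_dvd hq₂
    obtain ⟨p, hp, hpq₁⟩ := Nat.exists_prime_and_dvd hne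
    have hk : 0 < q₁.factorization p := hp.factorization_pos_of_dvd hq₁.pos.ne' hpq₁
    have hcofactor_lt : q₁ / p ^ q₁.factorization p < q₁ :=
      Nat.div_lt_self hq₁.pos (Nat.one_lt_pow hk.ne' hp.one_lt)
    rw [hμ.map_eq_map_ordProj_mul_map_ordCompl hq₁ hp,
      hμ.map_eq_map_ordProj_mul_map_ordCompl hq₂ hp]
    exact mul_dvd_mul
      (hprime_pow p hp (hq₁.of_dvd_nat hpq₁) _ _
        ((Nat.factorization_le_iff_dvd hq₁.pos.ne' hq₂.pos.ne').2 hdvd p))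
      (ih _ hcofactor_lt (hq₂.of_dvd_nat (Nat.ordCompl_dvd q₂ p))
        (Nat.ordCompl_dvd_ordCompl_of_dvd hdvd p))

end IsOddMultiplicative

theorem mu_dvd_of_dvd_general
    (μ : ℕ → ℕ)
    (hpow : ∀ p : ℕ, p.Prime → Odd p → ∀ n : ℕ, 2 ≤ n →
      μ (p ^ n) = μ (p ^ (n - 1)) * (p ^ (n / 2 + 1) - 1))
    (hmul : ∀ a b : ℕ, 0 < a → 0 < b → Odd a → Odd b → Nat.Coprime a b →
      μ (a * b) = μ a * μ b) :
    ∀ q₁ q₂ : ℕ, 0 < q₁ → 0 < q₂ → Odd q₁ → Odd q₂ → q₁ ∣ q₂ →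
      μ q₁ ∣ μ q₂ := by
  have hμ : IsOddMultiplicative μ := hmul
  intro q₁ q₂ _ _ _ hq₂ hdvd
  exact hμ.map_dvd_map_of_dvd
    (fun p hp hpodd _ _ hmn => hμ.map_pow_dvd_of_le hpodd (hpow p hp hpodd) hmn)
    hq₂ hdvd

/-- For the multiplicative function `μ` on odd positive integers,
`q₁ ∣ q₂` implies `μ q₁ ∣ μ q₂`. -/
theorem mu_dvd_of_dvd
    (μ : ℕ → ℕ) (h1 : μ 1 = 1)
    (hprime : ∀ p : ℕ, p.Prime → Odd p → μ p = p * (p - 1))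
    (hpow : ∀ p : ℕ, p.Prime → Odd p → ∀ n : ℕ, 2 ≤ n →
      μ (p ^ n) = μ (p ^ (n - 1)) * (p ^ (n / 2 + 1) - 1))
    (hmul : ∀ a b : ℕ, 0 < a → 0 < b → Odd a → Odd b → Nat.Coprime a b →
      μ (a * b) = μ a * μ b) :
    ∀ q₁ q₂ : ℕ, 0 < q₁ → 0 < q₂ → Odd q₁ → Odd q₂ → q₁ ∣ q₂ →
      μ q₁ ∣ μ q₂ :=
  mu_dvd_of_dvd_general μ hpow hmul
end

section
/- The real number ℙ₀ = ∏_{k≥2} ((1 - 2^{-k}) ζ(k))^{-1} satisfies 0.75 < ℙ₀ < 0.76. -/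
/-- The Riemann zeta function at a natural number `k ≥ 2`, as a real number. -/
noncomputable def zetaReal (k : ℕ) : ℝ := ∑' n : ℕ, (((n : ℝ) + 1) ^ k)⁻¹

/-!
With `λ(s) = (1 - 2⁻ˢ) ζ(s)` we have `ℙ₀ = exp (-L)` where `L = ∑_{s ≥ 2} log λ(s)`, so it suffices
to show `log (25/19) < L < log (4/3)`. Since `1 ≤ λ(s) ≤ 1 + (9/2) 3⁻ˢ`, every term of `L` is
nonnegative and the terms with `s ≥ 7` add up to at most `1/324`. The remaining factors come from
`ζ(2) = π²/6`, `ζ(4) = π⁴/90` and partial sums of `ζ(3)`, `ζ(5)`, `ζ(6)`, whose tails are bounded by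
comparison with the telescoping series `∑ 1/(n(n+1))`.
-/

open Finset Real Filter Topology

lemma summable_inv_add_one_pow {s : ℕ} (hs : 2 ≤ s) :
    Summable fun n : ℕ => (((n : ℝ) + 1) ^ s)⁻¹ := by
  have h : Summable fun n : ℕ => ((n : ℝ) ^ s)⁻¹ := by
    simpa only [one_div] using Real.summable_one_div_nat_pow.mpr hs
  simpa only [Nat.cast_add, Nat.cast_one] using (summable_nat_add_iff 1).mpr h

lemma zetaReal_eq_of_hasSum {s : ℕ} (hs : s ≠ 0) {a : ℝ}
    (h : HasSum (fun n : ℕ => 1 / (n : ℝ) ^ s) a) : zetaReal s = a := by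
  have h1 := (hasSum_nat_add_iff' 1).mpr h
  simp only [range_one, sum_singleton, Nat.cast_zero, zero_pow hs, inv_zero, sub_zero,
    Nat.cast_add, Nat.cast_one, one_div] at h1
  exact h1.tsum_eq

lemma sum_range_le_zetaReal {s : ℕ} (hs : 2 ≤ s) (N : ℕ) :
    ∑ n ∈ range N, (((n : ℝ) + 1) ^ s)⁻¹ ≤ zetaReal s :=
  (summable_inv_add_one_pow hs).sum_le_tsum _ fun _ _ => by positivity

lemma hasSum_sub_succ_of_antitone {f : ℕ → ℝ} (hf : Antitone f)
    (hlim : Tendsto f atTop (𝓝 0)) : HasSum (fun n => f n - f (n + 1)) (f 0) := by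
  rw [hasSum_iff_tendsto_nat_of_nonneg fun n => sub_nonneg.mpr (hf n.le_succ)]
  simpa only [sum_range_sub', sub_zero] using tendsto_const_nhds.sub hlim

lemma hasSum_inv_mul_add_one {a : ℝ} (ha : 0 < a) :
    HasSum (fun n : ℕ => (((n : ℝ) + a) * ((n : ℝ) + a + 1))⁻¹) a⁻¹ := by
  have hpos (n : ℕ) : 0 < (n : ℝ) + a := by positivity
  have hanti : Antitone fun n : ℕ => ((n : ℝ) + a)⁻¹ := fun m n hmn =>
    inv_anti₀ (hpos m) (by gcongr)
  have hlim : Tendsto (fun n : ℕ => ((n : ℝ) + a)⁻¹) atTop (𝓝 0) :=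
    (tendsto_atTop_add_const_right _ a tendsto_natCast_atTop_atTop).inv_tendsto_atTop
  convert hasSum_sub_succ_of_antitone hanti hlim using 1
  · ext n
    push_cast
    field_simp [(hpos n).ne', (by linarith [hpos n] : (n : ℝ) + a + 1 ≠ 0)]
    ring
  · simp

lemma zetaReal_le_sum_range_add {s N : ℕ} (hs : 2 ≤ s) (hN : 0 < N) :
    zetaReal s ≤ ∑ n ∈ range N, (((n : ℝ) + 1) ^ s)⁻¹ + ((N : ℝ) * ((N : ℝ) + 1) ^ (s - 2))⁻¹ := by
  have hNpos : (0 : ℝ) < N := by exact_mod_cast hN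
  have hcomp := (hasSum_inv_mul_add_one hNpos).mul_left (((N : ℝ) + 1) ^ (s - 2))⁻¹
  rw [zetaReal, ← (summable_inv_add_one_pow hs).sum_add_tsum_nat_add N, mul_inv_rev,
    ← hcomp.tsum_eq]
  gcongr with n
  · exact (summable_nat_add_iff N).mpr (summable_inv_add_one_pow hs)
  · exact hcomp.summable
  rw [← mul_inv]
  gcongr
  calc ((N : ℝ) + 1) ^ (s - 2) * (((n : ℝ) + N) * ((n : ℝ) + N + 1))
      ≤ ((n : ℝ) + N + 1) ^ (s - 2) * (((n : ℝ) + N + 1) * ((n : ℝ) + N + 1)) := by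
        gcongr ?_ ^ _ * (?_ * _) <;> linarith
    _ = (((n + N : ℕ) : ℝ) + 1) ^ s := by
        rw [← sq, ← pow_add, Nat.sub_add_cancel hs]
        push_cast
        ring

/-- `(1 - 2⁻ˢ) ζ(s)` is Dirichlet's lambda function `∑_{n odd} n⁻ˢ`. -/
noncomputable def dirichletLambda (s : ℕ) : ℝ := (1 - ((2 : ℝ) ^ s)⁻¹) * zetaReal s

lemma two_pow_add_three_pow_le_four_pow {s : ℕ} (hs : 2 ≤ s) : 2 ^ s + 3 ^ s ≤ 4 ^ s := by
  induction s, hs using Nat.le_induction with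
  | base => norm_num
  | succ s _ ih => rw [pow_succ, pow_succ, pow_succ]; omega

-- With `x = 2⁻ˢ`, `y = 3⁻ˢ`: `(1 - x)(1 + x + y) ≥ 1` is equivalent to `2ˢ + 3ˢ ≤ 4ˢ`.
lemma one_le_dirichletLambda {s : ℕ} (hs : 2 ≤ s) : 1 ≤ dirichletLambda s := by
  have hzeta := sum_range_le_zetaReal hs 3
  norm_num [sum_range_succ] at hzeta
  have hpow : (2 : ℝ) ^ s + 3 ^ s ≤ (2 ^ s) ^ 2 := by
    rw [← pow_mul, mul_comm, pow_mul]
    exact_mod_cast two_pow_add_three_pow_le_four_pow hs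
  have h2 : (0 : ℝ) < 2 ^ s := by positivity
  have h3 : (0 : ℝ) < 3 ^ s := by positivity
  calc (1 : ℝ) ≤ (1 - ((2 : ℝ) ^ s)⁻¹) * (1 + ((2 : ℝ) ^ s)⁻¹ + ((3 : ℝ) ^ s)⁻¹) := by
        field_simp
        nlinarith
    _ ≤ dirichletLambda s := by
        unfold dirichletLambda
        gcongr
        exact sub_nonneg.mpr (inv_le_one_of_one_le₀ (one_le_pow₀ one_le_two))

lemma dirichletLambda_le {s : ℕ} (hs : 2 ≤ s) :
    dirichletLambda s ≤ 1 + 9 / 2 * (3 : ℝ)⁻¹ ^ s := by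
  have hzeta := zetaReal_le_sum_range_add (N := 2) hs (by norm_num)
  have htail : (((2 : ℕ) : ℝ) * (((2 : ℕ) : ℝ) + 1) ^ (s - 2))⁻¹ = 9 / 2 * (3 : ℝ)⁻¹ ^ s := by
    obtain ⟨t, rfl⟩ := Nat.exists_eq_add_of_le hs
    rw [Nat.add_sub_cancel_left, inv_pow, pow_add]
    push_cast
    ring
  rw [htail] at hzeta
  norm_num [sum_range_succ] at hzeta
  have hx : 0 ≤ ((2 : ℝ) ^ s)⁻¹ := by positivity
  have hx1 : ((2 : ℝ) ^ s)⁻¹ ≤ 1 := inv_le_one_of_one_le₀ (one_le_pow₀ one_le_two)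
  have hT : 0 ≤ 9 / 2 * (3 : ℝ)⁻¹ ^ s := by positivity
  calc dirichletLambda s
      ≤ (1 - ((2 : ℝ) ^ s)⁻¹) * (1 + ((2 : ℝ) ^ s)⁻¹ + 9 / 2 * (3 : ℝ)⁻¹ ^ s) := by
        unfold dirichletLambda
        gcongr
        linarith
    _ ≤ 1 + 9 / 2 * (3 : ℝ)⁻¹ ^ s := by nlinarith

lemma dirichletLambda_pos {s : ℕ} (hs : 2 ≤ s) : 0 < dirichletLambda s :=
  one_pos.trans_le (one_le_dirichletLambda hs)

lemma log_dirichletLambda_le {s : ℕ} (hs : 2 ≤ s) :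
    log (dirichletLambda s) ≤ 9 / 2 * (3 : ℝ)⁻¹ ^ s := by
  have := log_le_sub_one_of_pos (dirichletLambda_pos hs)
  linarith [dirichletLambda_le hs]

lemma summable_log_dirichletLambda :
    Summable fun k : ℕ => log (dirichletLambda (k + 2)) := by
  refine Summable.of_nonneg_of_le (fun k => log_nonneg (one_le_dirichletLambda (by omega)))
    (fun k => log_dirichletLambda_le (by omega)) ?_
  exact ((summable_geometric_of_lt_one (by norm_num) (by norm_num)).comp_injective
    (add_left_injective 2)).mul_left _

lemma tsum_log_dirichletLambda_add_seven_le :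
    ∑' k : ℕ, log (dirichletLambda (k + 7)) ≤ 1 / 324 := by
  have hgeom : HasSum (fun k : ℕ => 9 / 2 * (3 : ℝ)⁻¹ ^ (k + 7)) (1 / 324) := by
    have h := (hasSum_geometric_of_lt_one (r := (3 : ℝ)⁻¹) (by norm_num) (by norm_num)).mul_left
      (9 / 2 * (3 : ℝ)⁻¹ ^ 7)
    rw [show 9 / 2 * (3 : ℝ)⁻¹ ^ 7 * (1 - 3⁻¹)⁻¹ = 1 / 324 by norm_num] at h
    exact h.congr_fun fun k => by ring
  exact ((summable_nat_add_iff 5).mpr summable_log_dirichletLambda).tsum_le_tsum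
    (fun k => log_dirichletLambda_le (by omega)) hgeom.summable |>.trans_eq hgeom.tsum_eq

lemma dirichletLambda_two : dirichletLambda 2 = π ^ 2 / 8 := by
  rw [dirichletLambda, zetaReal_eq_of_hasSum two_ne_zero hasSum_zeta_two]
  ring

lemma dirichletLambda_four : dirichletLambda 4 = π ^ 4 / 96 := by
  rw [dirichletLambda, zetaReal_eq_of_hasSum four_ne_zero hasSum_zeta_four]
  ring

lemma zetaReal_three_mem_Icc : zetaReal 3 ∈ Set.Icc 1.198 1.2053 := by
  have lower := sum_range_le_zetaReal (s := 3) (by norm_num) 12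
  have upper := zetaReal_le_sum_range_add (s := 3) (N := 12) (by norm_num) (by norm_num)
  norm_num [sum_range_succ] at lower upper
  constructor <;> linarith

lemma zetaReal_five_mem_Icc : zetaReal 5 ∈ Set.Icc 1.036 1.0371 := by
  have lower := sum_range_le_zetaReal (s := 5) (by norm_num) 4
  have upper := zetaReal_le_sum_range_add (s := 5) (N := 8) (by norm_num) (by norm_num)
  norm_num [sum_range_succ] at lower upper
  constructor <;> linarith

lemma zetaReal_six_le : zetaReal 6 ≤ 1.0174 := by
  have upper := zetaReal_le_sum_range_add (s := 6) (N := 8) (by norm_num) (by norm_num)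
  norm_num [sum_range_succ] at upper
  linarith

lemma lt_prod_range_four_dirichletLambda :
    25 / 19 < ∏ k ∈ range 4, dirichletLambda (k + 2) := by
  obtain ⟨hζ3, -⟩ := zetaReal_three_mem_Icc
  obtain ⟨hζ5, -⟩ := zetaReal_five_mem_Icc
  simp only [prod_range_succ, prod_range_zero, one_mul, Nat.reduceAdd, dirichletLambda_two,
    dirichletLambda_four]
  calc (25 / 19 : ℝ)
      < 3.1415 ^ 2 / 8 * ((1 - (2 ^ 3)⁻¹) * 1.198) * (3.1415 ^ 4 / 96)
          * ((1 - (2 ^ 5)⁻¹) * 1.036) := by norm_num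
    _ ≤ π ^ 2 / 8 * dirichletLambda 3 * (π ^ 4 / 96) * dirichletLambda 5 := by
        have hπ := pi_gt_d4.le
        unfold dirichletLambda
        gcongr

lemma prod_range_five_dirichletLambda_lt :
    ∏ k ∈ range 5, dirichletLambda (k + 2) < 4 / 3 * (1 - 1 / 324) := by
  obtain ⟨-, hζ3⟩ := zetaReal_three_mem_Icc
  obtain ⟨-, hζ5⟩ := zetaReal_five_mem_Icc
  simp only [prod_range_succ, prod_range_zero, one_mul, Nat.reduceAdd, dirichletLambda_two,
    dirichletLambda_four]
  calc π ^ 2 / 8 * dirichletLambda 3 * (π ^ 4 / 96) * dirichletLambda 5 * dirichletLambda 6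
      ≤ 3.1416 ^ 2 / 8 * ((1 - (2 ^ 3)⁻¹) * 1.2053) * (3.1416 ^ 4 / 96)
          * ((1 - (2 ^ 5)⁻¹) * 1.0371) * ((1 - (2 ^ 6)⁻¹) * 1.0174) := by
        have hπ := pi_lt_d4.le
        have hζ6 := zetaReal_six_le
        unfold dirichletLambda
        gcongr
        all_goals exact zero_le_one.trans (one_le_dirichletLambda (by norm_num))
    _ < 4 / 3 * (1 - 1 / 324) := by norm_num

lemma log_lt_tsum_log_dirichletLambda :
    log (25 / 19) < ∑' k : ℕ, log (dirichletLambda (k + 2)) :=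
  calc log (25 / 19)
      < log (∏ k ∈ range 4, dirichletLambda (k + 2)) :=
        log_lt_log (by norm_num) lt_prod_range_four_dirichletLambda
    _ = ∑ k ∈ range 4, log (dirichletLambda (k + 2)) :=
        log_prod fun k _ => (dirichletLambda_pos (by omega)).ne'
    _ ≤ ∑' k : ℕ, log (dirichletLambda (k + 2)) :=
        summable_log_dirichletLambda.sum_le_tsum _ fun k _ =>
          log_nonneg (one_le_dirichletLambda (by omega))

lemma tsum_log_dirichletLambda_lt :
    ∑' k : ℕ, log (dirichletLambda (k + 2)) < log (4 / 3) := by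
  rw [← summable_log_dirichletLambda.sum_add_tsum_nat_add 5,
    ← log_prod fun k _ => (dirichletLambda_pos (by omega)).ne']
  have hlog : log (1 - 1 / 324) ≤ -(1 / 324) := by
    linarith [log_le_sub_one_of_pos (by norm_num : (0 : ℝ) < 1 - 1 / 324)]
  calc log (∏ k ∈ range 5, dirichletLambda (k + 2))
        + ∑' k : ℕ, log (dirichletLambda (k + 5 + 2))
      < log (4 / 3 * (1 - 1 / 324)) + 1 / 324 := by
        refine add_lt_add_of_lt_of_le ?_ tsum_log_dirichletLambda_add_seven_le
        exact log_lt_log (prod_pos fun k _ => dirichletLambda_pos (by omega))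
          prod_range_five_dirichletLambda_lt
    _ ≤ log (4 / 3) := by
        rw [log_mul (by norm_num) (by norm_num)]
        linarith

lemma tprod_inv_dirichletLambda :
    ∏' k : ℕ, (dirichletLambda (k + 2))⁻¹ = exp (-∑' k : ℕ, log (dirichletLambda (k + 2))) := by
  rw [← tsum_neg, ← rexp_tsum_eq_tprod (fun k => inv_pos.mpr (dirichletLambda_pos (by omega)))
    (by simpa only [log_inv] using summable_log_dirichletLambda.neg)]
  simp only [log_inv]

/-- `ℙ₀ = ∏_{k≥2} ((1 - 2^{-k}) ζ(k))⁻¹` satisfies `0.75 < ℙ₀ < 0.76`. -/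
theorem P0_bounds :
    0.75 < (∏' k : ℕ, ((1 - ((2 : ℝ) ^ (k + 2))⁻¹) * zetaReal (k + 2))⁻¹) ∧
    (∏' k : ℕ, ((1 - ((2 : ℝ) ^ (k + 2))⁻¹) * zetaReal (k + 2))⁻¹) < 0.76 := by
  change 0.75 < ∏' k : ℕ, (dirichletLambda (k + 2))⁻¹ ∧
    ∏' k : ℕ, (dirichletLambda (k + 2))⁻¹ < 0.76
  rw [tprod_inv_dirichletLambda]
  constructor
  · calc (0.75 : ℝ) = exp (-log (4 / 3)) := by rw [exp_neg, exp_log (by norm_num)]; norm_num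
      _ < _ := exp_lt_exp.mpr (neg_lt_neg tsum_log_dirichletLambda_lt)
  · calc _ < exp (-log (25 / 19)) := exp_lt_exp.mpr (neg_lt_neg log_lt_tsum_log_dirichletLambda)
      _ = 0.76 := by rw [exp_neg, exp_log (by norm_num)]; norm_num
end

section
/- For every real x with 0 < x < 1, let c_m = x^m/(1-x^m) for m ≥ 1; then the sequence of truncations s_N = 1 + c_1(1 + c_1(1 + c_2(1 + c_2(⋯(1 + c_N(1 + c_N · 1))⋯)))) converges to ∏_{k≥1}(1 - x^k)^{-1} as N → ∞. -/
namespace NestedTruncAux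

open Filter Finset Real

noncomputable def Q (x : ℝ) (n : ℕ) : ℝ := ∏ k ∈ range n, (1 - x ^ (k + 1))

variable {x : ℝ}

lemma fac_pos (hx0 : 0 < x) (hx1 : x < 1) (k : ℕ) : 0 < 1 - x ^ (k + 1) := by
  have : x ^ (k + 1) < 1 := pow_lt_one₀ hx0.le hx1 (Nat.succ_ne_zero k)
  linarith

lemma fac_ne (hx0 : 0 < x) (hx1 : x < 1) (k : ℕ) : 1 - x ^ (k + 1) ≠ 0 :=
  (fac_pos hx0 hx1 k).ne'

lemma Q_pos (hx0 : 0 < x) (hx1 : x < 1) (n : ℕ) : 0 < Q x n :=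
  prod_pos fun k _ => fac_pos hx0 hx1 k

lemma Q_ne (hx0 : 0 < x) (hx1 : x < 1) (n : ℕ) : Q x n ≠ 0 :=
  (Q_pos hx0 hx1 n).ne'

lemma Q_zero : Q x 0 = 1 := prod_range_zero _

lemma Q_succ (n : ℕ) : Q x (n + 1) = Q x n * (1 - x ^ (n + 1)) := prod_range_succ _ _

lemma Q_le_one (hx0 : 0 < x) (hx1 : x < 1) (n : ℕ) : Q x n ≤ 1 :=
  prod_le_one (fun k _ => (fac_pos hx0 hx1 k).le)
    (fun k _ => by have := pow_pos hx0 (k + 1); linarith)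

lemma Q_anti (hx0 : 0 < x) (hx1 : x < 1) (m p : ℕ) : Q x (m + p) ≤ Q x m := by
  induction p with
  | zero => exact le_refl _
  | succ p ih =>
      have h1 := fac_pos hx0 hx1 (m + p)
      have h2 := Q_pos hx0 hx1 (m + p)
      calc Q x (m + (p + 1)) = Q x (m + p) * (1 - x ^ (m + p + 1)) := Q_succ _
        _ ≤ Q x (m + p) * 1 := by nlinarith [pow_pos hx0 (m + p + 1)]
        _ = Q x (m + p) := mul_one _
        _ ≤ Q x m := ih

lemma geom_le (hx0 : 0 < x) (hx1 : x < 1) (n : ℕ) :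
    ∑ k ∈ range n, x ^ k ≤ (1 - x)⁻¹ := by
  have h1x : (0:ℝ) < 1 - x := by linarith
  rw [inv_eq_one_div, le_div_iff₀ h1x]
  nlinarith [geom_sum_mul x n, pow_nonneg hx0.le n]

lemma pascal (hx0 : 0 < x) (hx1 : x < 1) (i m r : ℕ) :
    x ^ ((i+1)*(i+1+r)) * Q x (i+m+2) / (Q x (i+1) * Q x (m+1) * Q x (i+1+r))
      = x ^ ((i+1)*(i+1+r)) * Q x (i+m+1) / (Q x (i+1) * Q x m * Q x (i+1+r))
        + x ^ (i+m+1+r+1) *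
          (x ^ (i*(i+r+1)) * Q x (i+m+1) / (Q x i * Q x (m+1) * Q x (i+r+1))) := by
  have h1 : Q x (i+m+2) = Q x (i+m+1) * (1 - x ^ (i+m+2)) := by
    have := Q_succ (x := x) (i+m+1); simpa using this
  have h2 : Q x (m+1) = Q x m * (1 - x ^ (m+1)) := Q_succ m
  have h3 : Q x (i+1) = Q x i * (1 - x ^ (i+1)) := Q_succ i
  have hir : i+1+r = i+r+1 := by omega
  rw [h1, h2, h3, hir]
  have n1 := Q_ne hx0 hx1 (i+m+1)
  have n2 := Q_ne hx0 hx1 m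
  have n3 := Q_ne hx0 hx1 i
  have n4 := Q_ne hx0 hx1 (i+r+1)
  have n5 := fac_ne hx0 hx1 m
  have n6 := fac_ne hx0 hx1 i
  field_simp
  ring

lemma Q_diff (hx0 : 0 < x) (hx1 : x < 1) (m p : ℕ) :
    Q x m - Q x (m + p) ≤ Q x m * (x ^ (m + 1) * (1 - x)⁻¹) := by
  have hsum : ∀ p : ℕ, Q x m - Q x (m + p) ≤ Q x m * ∑ k ∈ range p, x ^ (m + 1 + k) := by
    intro p
    induction p with
    | zero => simp
    | succ p ih =>
        have e1 : m + (p + 1) = (m + p) + 1 := by omega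
        rw [e1, Q_succ (m + p), Finset.sum_range_succ]
        have h1 : Q x (m + p) ≤ Q x m := Q_anti hx0 hx1 m p
        have h2 : 0 < x ^ (m + p + 1) := pow_pos hx0 _
        have h3 : 0 < Q x (m + p) := Q_pos hx0 hx1 _
        have e2 : x ^ (m + 1 + p) = x ^ (m + p + 1) := by ring_nf
        rw [e2]
        nlinarith
  calc Q x m - Q x (m + p) ≤ Q x m * ∑ k ∈ range p, x ^ (m + 1 + k) := hsum p
    _ = Q x m * (x ^ (m + 1) * ∑ k ∈ range p, x ^ k) := by
        rw [Finset.mul_sum, Finset.mul_sum, Finset.mul_sum]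
        exact Finset.sum_congr rfl fun k _ => by rw [← pow_add]
    _ ≤ Q x m * (x ^ (m + 1) * (1 - x)⁻¹) := by
        have h1 := Q_pos hx0 hx1 m
        have h2 := pow_pos hx0 (m + 1)
        exact mul_le_mul_of_nonneg_left
          (mul_le_mul_of_nonneg_left (geom_le hx0 hx1 p) h2.le) h1.le

lemma durfee (hx0 : 0 < x) (hx1 : x < 1) : ∀ (N r : ℕ),
    ∑ j ∈ range (N+1), x ^ (j*(j+r)) * Q x N / (Q x j * Q x (N - j) * Q x (j + r))
      = (Q x (N + r))⁻¹ := by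
  intro N
  induction N with
  | zero =>
      intro r
      simp [Q_zero]
  | succ N IH =>
      intro r
      rw [Finset.sum_range_succ', Finset.sum_range_succ]
      have key : ∀ i ∈ range N,
          x ^ ((i + 1) * (i + 1 + r)) * Q x (N + 1) /
              (Q x (i + 1) * Q x (N + 1 - (i + 1)) * Q x (i + 1 + r))
            = x ^ ((i + 1) * (i + 1 + r)) * Q x N /
                (Q x (i + 1) * Q x (N - (i + 1)) * Q x (i + 1 + r))
              + x ^ (N + r + 1) *
                (x ^ (i * (i + (r + 1))) * Q x N /
                  (Q x i * Q x (N - i) * Q x (i + (r + 1)))) := by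
        intro i hi
        rw [Finset.mem_range] at hi
        obtain ⟨m, rfl⟩ : ∃ m, N = i + 1 + m := ⟨N - (i + 1), by omega⟩
        have e1 : i + 1 + m + 1 = i + m + 2 := by omega
        have e2 : i + 1 + m + 1 - (i + 1) = m + 1 := by omega
        have e3 : i + 1 + m - (i + 1) = m := by omega
        have e4 : i + 1 + m = i + m + 1 := by omega
        have e5 : i + 1 + m - i = m + 1 := by omega
        have e6 : i + (r + 1) = i + r + 1 := by omega
        have e7 : i + 1 + m + r + 1 = i + m + 1 + r + 1 := by omega
        rw [e2, e3, e5, e7, e6, e1, e4]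
        exact pascal hx0 hx1 i m r
      rw [Finset.sum_congr rfl key, Finset.sum_add_distrib, ← Finset.mul_sum]
      have hG := IH r
      rw [Finset.sum_range_succ'] at hG
      have hH := IH (r + 1)
      rw [Finset.sum_range_succ] at hH
      have hF0 : x ^ (0 * (0 + r)) * Q x (N + 1) /
            (Q x 0 * Q x (N + 1 - 0) * Q x (0 + r))
          = x ^ (0 * (0 + r)) * Q x N / (Q x 0 * Q x (N - 0) * Q x (0 + r)) := by
        have n1 := Q_ne hx0 hx1 (N + 1)
        have n2 := Q_ne hx0 hx1 N
        have n3 := Q_ne hx0 hx1 r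
        simp only [Nat.sub_zero, Q_zero]
        field_simp
      have hFN1 : x ^ ((N + 1) * (N + 1 + r)) * Q x (N + 1) /
            (Q x (N + 1) * Q x (N + 1 - (N + 1)) * Q x (N + 1 + r))
          = x ^ (N + r + 1) *
              (x ^ (N * (N + (r + 1))) * Q x N /
                (Q x N * Q x (N - N) * Q x (N + (r + 1)))) := by
        have n1 := Q_ne hx0 hx1 (N + 1)
        have n2 := Q_ne hx0 hx1 N
        have e1 : N + (r + 1) = N + 1 + r := by omega
        have n3 := Q_ne hx0 hx1 (N + 1 + r)
        simp only [Nat.sub_self, Q_zero, e1]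
        field_simp
        ring
      have hfinal : (Q x (N + r))⁻¹ + x ^ (N + r + 1) * (Q x (N + (r + 1)))⁻¹
          = (Q x (N + 1 + r))⁻¹ := by
        have e1 : N + (r + 1) = N + r + 1 := by omega
        have e2 : N + 1 + r = N + r + 1 := by omega
        rw [e1, e2, Q_succ (N + r)]
        have n1 := Q_ne hx0 hx1 (N + r)
        have n2 := fac_ne hx0 hx1 (N + r)
        field_simp
        ring
      linear_combination hG + x ^ (N + r + 1) * hH + hF0 + hFN1 + hfinal

lemma fold_affine (c : ℕ → ℝ) :
    ∀ (N : ℕ) (a : ℝ),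
      (List.range N).reverse.foldl (fun acc k => 1 + c (k + 1) * (1 + c (k + 1) * acc)) a
        = (List.range N).reverse.foldl (fun acc k => 1 + c (k + 1) * (1 + c (k + 1) * acc)) 1
          + (a - 1) * ∏ k ∈ range N, (c (k + 1)) ^ 2 := by
  intro N
  induction N with
  | zero => intro a; simp
  | succ N ih =>
      intro a
      have hrev : (List.range (N + 1)).reverse = N :: (List.range N).reverse := by
        rw [List.range_succ, List.reverse_append]; rfl
      rw [hrev]
      simp only [List.foldl_cons]
      rw [ih (1 + c (N + 1) * (1 + c (N + 1) * a)),
        ih (1 + c (N + 1) * (1 + c (N + 1) * 1)), prod_range_succ]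
      ring

lemma prodc (hx0 : 0 < x) (hx1 : x < 1) (c : ℕ → ℝ)
    (hc : ∀ k, c k = x ^ k / (1 - x ^ k)) :
    ∀ N, ∏ k ∈ range N, (c (k + 1)) ^ 2 = x ^ (N * (N + 1)) / (Q x N) ^ 2 := by
  intro N
  induction N with
  | zero => simp [Q_zero]
  | succ N ih =>
      rw [prod_range_succ, ih, hc (N + 1), Q_succ]
      have n1 := Q_ne hx0 hx1 N
      have n2 := fac_ne hx0 hx1 N
      field_simp
      ring

lemma s_eq_sum (hx0 : 0 < x) (hx1 : x < 1) (c : ℕ → ℝ)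
    (hc : ∀ k, c k = x ^ k / (1 - x ^ k)) :
    ∀ N, (List.range N).reverse.foldl (fun acc k => 1 + c (k + 1) * (1 + c (k + 1) * acc)) 1
        = ∑ n ∈ range (N + 1), x ^ (n * n) / (Q x n) ^ 2 := by
  intro N
  induction N with
  | zero => simp [Q_zero]
  | succ N ih =>
      have hrev : (List.range (N + 1)).reverse = N :: (List.range N).reverse := by
        rw [List.range_succ, List.reverse_append]; rfl
      rw [hrev]
      simp only [List.foldl_cons]
      rw [fold_affine c N (1 + c (N + 1) * (1 + c (N + 1) * 1)), ih,
        prodc hx0 hx1 c hc N, Finset.sum_range_succ _ (N + 1)]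
      have heq : (1 + c (N + 1) * (1 + c (N + 1) * 1) - 1) *
            (x ^ (N * (N + 1)) / (Q x N) ^ 2)
          = x ^ ((N + 1) * (N + 1)) / (Q x (N + 1)) ^ 2 := by
        rw [hc (N + 1), Q_succ]
        have n1 := Q_ne hx0 hx1 N
        have n2 := fac_ne hx0 hx1 N
        field_simp
        ring
      rw [heq]

theorem main (x : ℝ) (hx0 : 0 < x) (hx1 : x < 1)
    (c : ℕ → ℝ) (hc : ∀ k, c k = x ^ k / (1 - x ^ k))
    (s : ℕ → ℝ)
    (hs : ∀ N, s N = (List.range N).reverse.foldl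
      (fun acc k => 1 + c (k + 1) * (1 + c (k + 1) * acc)) 1) :
    Filter.Tendsto s Filter.atTop (nhds (∏' k : ℕ, (1 - x ^ (k + 1))⁻¹)) := by
  have hsN : ∀ N, s N = ∑ n ∈ range (N + 1), x ^ (n * n) / (Q x n) ^ 2 := fun N => by
    rw [hs N]; exact s_eq_sum hx0 hx1 c hc N
  -- the Durfee identity with r = 0
  have hid : ∀ N : ℕ, ∑ j ∈ range (N + 1),
      x ^ (j * j) * Q x N / (Q x j * Q x (N - j) * Q x j) = (Q x N)⁻¹ := by
    intro N
    have := durfee hx0 hx1 N 0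
    simpa using this
  -- lower bound
  have hlow : ∀ N, (Q x N)⁻¹ ≤ s N := by
    intro N
    rw [hsN N, ← hid N]
    apply Finset.sum_le_sum
    intro n hn
    rw [Finset.mem_range] at hn
    obtain ⟨m, rfl⟩ : ∃ m, N = n + m := ⟨N - n, by omega⟩
    have e1 : n + m - n = m := by omega
    rw [e1]
    have hQm : Q x (n + m) ≤ Q x m := by
      have := Q_anti hx0 hx1 m n
      rwa [Nat.add_comm m n] at this
    have p1 := Q_pos hx0 hx1 n
    have p2 := Q_pos hx0 hx1 m
    have p3 := Q_pos hx0 hx1 (n + m)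
    have pA : (0:ℝ) < x ^ (n * n) := pow_pos hx0 _
    rw [div_le_div_iff₀ (by positivity) (by positivity)]
    nlinarith [mul_le_mul_of_nonneg_left hQm (by positivity : (0:ℝ) ≤ x ^ (n * n) * Q x n ^ 2)]
  set K : ℝ := (1 - x)⁻¹ with hK
  have hKpos : 0 < K := by rw [hK]; exact inv_pos.2 (by linarith)
  -- upper bound
  have hup : ∀ N, s N ≤ (Q x N)⁻¹ + x ^ (N + 1) * (K / (Q x N) ^ 2) * (1 + K) := by
    intro N
    have hterm : ∀ n ∈ range (N + 1),
        x ^ (n * n) / (Q x n) ^ 2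
          ≤ x ^ (n * n) * Q x N / (Q x n * Q x (N - n) * Q x n)
            + x ^ (N + 1) * (K / (Q x N) ^ 2) * x ^ (n * (n - 1)) := by
      intro n hn
      rw [Finset.mem_range] at hn
      obtain ⟨m, rfl⟩ : ∃ m, N = n + m := ⟨N - n, by omega⟩
      have e1 : n + m - n = m := by omega
      rw [e1]
      have hQm : Q x (n + m) ≤ Q x m := by
        have := Q_anti hx0 hx1 m n
        rwa [Nat.add_comm m n] at this
      have hQd : Q x m - Q x (n + m) ≤ Q x m * (x ^ (m + 1) * K) := by
        have := Q_diff hx0 hx1 m n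
        rwa [Nat.add_comm m n] at this
      have p1 := Q_pos hx0 hx1 n
      have p2 := Q_pos hx0 hx1 m
      have p3 := Q_pos hx0 hx1 (n + m)
      have pA : (0:ℝ) < x ^ (n * n) := pow_pos hx0 _
      have hQn : Q x (n + m) ≤ Q x n := Q_anti hx0 hx1 n m
      have step1 : x ^ (n * n) / (Q x n) ^ 2
          - x ^ (n * n) * Q x (n + m) / (Q x n * Q x m * Q x n)
          = x ^ (n * n) * (Q x m - Q x (n + m)) / ((Q x n) ^ 2 * Q x m) := by
        field_simp
      have step2 : x ^ (n * n) * (Q x m - Q x (n + m)) / ((Q x n) ^ 2 * Q x m)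
          ≤ x ^ (n * n) * (Q x m * (x ^ (m + 1) * K)) / ((Q x n) ^ 2 * Q x m) := by
        have hnum : x ^ (n * n) * (Q x m - Q x (n + m))
            ≤ x ^ (n * n) * (Q x m * (x ^ (m + 1) * K)) :=
          mul_le_mul_of_nonneg_left hQd pA.le
        exact div_le_div_of_nonneg_right hnum (by positivity)

      have step3 : x ^ (n * n) * (Q x m * (x ^ (m + 1) * K)) / ((Q x n) ^ 2 * Q x m)
          = x ^ (n * n) * x ^ (m + 1) * K / (Q x n) ^ 2 := by
        field_simp
      have step4 : x ^ (n * n) * x ^ (m + 1) * K / (Q x n) ^ 2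
          ≤ x ^ (n * n) * x ^ (m + 1) * K / (Q x (n + m)) ^ 2 := by
        gcongr
      have step5 : x ^ (n * n) * x ^ (m + 1) * K / (Q x (n + m)) ^ 2
          = x ^ (n + m + 1) * (K / (Q x (n + m)) ^ 2) * x ^ (n * (n - 1)) := by
        have hexp : n * n + (m + 1) = (n + m + 1) + n * (n - 1) := by
          cases n with
          | zero => simp
          | succ k => simp [Nat.succ_sub_one]; ring
        rw [← pow_add, hexp, pow_add]
        ring
      linarith [step1, step2, step3, step4, step5]
    calc s N = ∑ n ∈ range (N + 1), x ^ (n * n) / (Q x n) ^ 2 := hsN N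
      _ ≤ ∑ n ∈ range (N + 1),
            (x ^ (n * n) * Q x N / (Q x n * Q x (N - n) * Q x n)
              + x ^ (N + 1) * (K / (Q x N) ^ 2) * x ^ (n * (n - 1))) :=
          Finset.sum_le_sum hterm
      _ = (Q x N)⁻¹ + x ^ (N + 1) * (K / (Q x N) ^ 2)
            * ∑ n ∈ range (N + 1), x ^ (n * (n - 1)) := by
          rw [Finset.sum_add_distrib, hid N, ← Finset.mul_sum]
      _ ≤ (Q x N)⁻¹ + x ^ (N + 1) * (K / (Q x N) ^ 2) * (1 + K) := by
          have hQN := Q_pos hx0 hx1 N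
          have hsum : ∑ n ∈ range (N + 1), x ^ (n * (n - 1)) ≤ 1 + K := by
            rw [Finset.sum_range_succ']
            simp only [Nat.zero_mul, pow_zero]
            have hb : ∀ i ∈ range N, x ^ ((i + 1) * (i + 1 - 1)) ≤ x ^ i := by
              intro i _
              apply pow_le_pow_of_le_one hx0.le hx1.le
              simp only [Nat.add_sub_cancel]
              nlinarith
            have h1 := Finset.sum_le_sum hb
            have h2 := geom_le hx0 hx1 N
            linarith
          have hBnn : (0:ℝ) ≤ x ^ (N + 1) * (K / (Q x N) ^ 2) :=
            mul_nonneg (pow_nonneg hx0.le _) (div_nonneg hKpos.le (sq_nonneg _))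
          exact add_le_add_right (mul_le_mul_of_nonneg_left hsum hBnn) _
  -- convergence of partial products
  have hfpos : ∀ k : ℕ, 0 < 1 - x ^ (k + 1) := fac_pos hx0 hx1
  have hlogsum : Summable (fun k : ℕ => Real.log ((1 - x ^ (k + 1))⁻¹)) := by
    have hcomp : Summable (fun k : ℕ => (K * x) * x ^ k) :=
      (summable_geometric_of_lt_one hx0.le hx1).mul_left _
    apply Summable.of_nonneg_of_le ?_ ?_ hcomp
    · intro k
      rw [Real.log_inv]
      have : Real.log (1 - x ^ (k + 1)) ≤ 0 :=
        Real.log_nonpos (hfpos k).le (by nlinarith [pow_pos hx0 (k + 1)])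
      linarith
    · intro k
      have h1 : Real.log ((1 - x ^ (k + 1))⁻¹) ≤ (1 - x ^ (k + 1))⁻¹ - 1 :=
        Real.log_le_sub_one_of_pos (inv_pos.2 (hfpos k))
      have h2 : (1 - x ^ (k + 1))⁻¹ - 1 = x ^ (k + 1) * (1 - x ^ (k + 1))⁻¹ := by
        have hne : (1 - x ^ (k + 1)) ≠ 0 := (hfpos k).ne'
        field_simp
        ring
      have h3 : (1 - x ^ (k + 1))⁻¹ ≤ K := by
        rw [hK]
        apply inv_anti₀ (by linarith)
        have : x ^ (k + 1) ≤ x := by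
          calc x ^ (k + 1) ≤ x ^ 1 := pow_le_pow_of_le_one hx0.le hx1.le (by omega)
            _ = x := pow_one x
        linarith
      have h4 : x ^ (k + 1) * (1 - x ^ (k + 1))⁻¹ ≤ x ^ (k + 1) * K :=
        mul_le_mul_of_nonneg_left h3 (pow_pos hx0 _).le
      have h5 : x ^ (k + 1) * K = K * x * x ^ k := by
        rw [pow_succ]
        ring
      linarith
  have hprod : HasProd (fun k : ℕ => (1 - x ^ (k + 1))⁻¹)
      (Real.exp (∑' k : ℕ, Real.log ((1 - x ^ (k + 1))⁻¹))) := by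
    have h := hlogsum.hasSum.rexp
    have heq : (rexp ∘ fun k : ℕ => Real.log ((1 - x ^ (k + 1))⁻¹))
        = fun k : ℕ => (1 - x ^ (k + 1))⁻¹ := by
      funext k
      simp only [Function.comp_apply]
      exact Real.exp_log (inv_pos.2 (hfpos k))
    rwa [heq] at h
  have htend : Filter.Tendsto (fun N => ∏ k ∈ range N, (1 - x ^ (k + 1))⁻¹)
      Filter.atTop (nhds (∏' k : ℕ, (1 - x ^ (k + 1))⁻¹)) :=
    by rw [hprod.tprod_eq]; exact hprod.tendsto_prod_nat
  have hQinv : ∀ N, (Q x N)⁻¹ = ∏ k ∈ range N, (1 - x ^ (k + 1))⁻¹ := by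
    intro N
    rw [Q, ← Finset.prod_inv_distrib]
  have hlowT : Filter.Tendsto (fun N => (Q x N)⁻¹) Filter.atTop
      (nhds (∏' k : ℕ, (1 - x ^ (k + 1))⁻¹)) := by
    simpa only [← hQinv] using htend
  have hxpowT : Filter.Tendsto (fun N : ℕ => x ^ (N + 1)) Filter.atTop (nhds 0) := by
    have h0 := tendsto_pow_atTop_nhds_zero_of_lt_one hx0.le hx1
    exact h0.comp (Filter.tendsto_add_atTop_nat 1)
  have hupT : Filter.Tendsto
      (fun N => (Q x N)⁻¹ + x ^ (N + 1) * (K / (Q x N) ^ 2) * (1 + K))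
      Filter.atTop (nhds (∏' k : ℕ, (1 - x ^ (k + 1))⁻¹)) := by
    have hsq : Filter.Tendsto (fun N => K / (Q x N) ^ 2) Filter.atTop
        (nhds (K * (∏' k : ℕ, (1 - x ^ (k + 1))⁻¹) ^ 2)) := by
      have h2 : Filter.Tendsto (fun N => ((Q x N)⁻¹) ^ 2) Filter.atTop
          (nhds ((∏' k : ℕ, (1 - x ^ (k + 1))⁻¹) ^ 2)) := hlowT.pow 2
      have : (fun N => K / (Q x N) ^ 2) = fun N => K * ((Q x N)⁻¹) ^ 2 := by
        funext N
        rw [div_eq_mul_inv, inv_pow]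
      rw [this]
      exact tendsto_const_nhds.mul h2
    have := hlowT.add (((hxpowT.mul hsq).mul
      (tendsto_const_nhds : Filter.Tendsto (fun _ : ℕ => 1 + K) Filter.atTop (nhds (1 + K)))))
    simpa using this
  exact tendsto_of_tendsto_of_tendsto_of_le_of_le hlowT hupT hlow hup

end NestedTruncAux

/-- The nested truncations
`s_N = 1 + c₁(1 + c₁(1 + c₂(1 + c₂(⋯(1 + c_N(1 + c_N))⋯))))`,
where `c_k = x^k/(1 - x^k)`, converge to `∏_{k≥1} (1 - x^k)⁻¹` as `N → ∞`. -/
theorem nested_truncations_tendsto (x : ℝ) (hx0 : 0 < x) (hx1 : x < 1)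
    (c : ℕ → ℝ) (hc : ∀ k, c k = x ^ k / (1 - x ^ k))
    (s : ℕ → ℝ)
    (hs : ∀ N, s N = (List.range N).reverse.foldl
      (fun acc k => 1 + c (k + 1) * (1 + c (k + 1) * acc)) 1) :
    Filter.Tendsto s Filter.atTop (nhds (∏' k : ℕ, (1 - x ^ (k + 1))⁻¹)) := by
  exact NestedTruncAux.main x hx0 hx1 c hc s hs
end
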